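/- arXiv:2107.10618 — 2 statements merged into one kernel-verified Lean document; each statement's English description precedes it below -/
import Mathlib

section
/- For all ρ > 0, m ∈ ℝ^d, M ∈ S₀^d, the operator norm of M satisfies |M|_∞ ≤ 2·((d−1)/d)·e_kin(ρ,m,M). -/
/-!
For a unit vector `v`, `λ_max (ρ⁻¹ m ⊗ m - M) ≥ ρ⁻¹ (m ⬝ v)² - ⟪v, M v⟫ ≥ -⟪v, M v⟫`, so the
quadratic form of `M` is bounded below by `-λ_max` on the unit sphere. Completing `v` to an
orthonormal basis, `tr M = 0` writes `⟪v, M v⟫` as minus the sum of the `d - 1` other diagonal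
entries, each at least `-λ_max`; hence `-λ_max ≤ ⟪v, M v⟫ ≤ (d - 1) λ_max`.
-/

open Matrix

noncomputable def lamMax {d : ℕ} (M : Matrix (Fin d) (Fin d) ℝ) : ℝ :=
  sSup {r : ℝ | ∃ v : Fin d → ℝ, v ⬝ᵥ v = 1 ∧ v ⬝ᵥ M.mulVec v = r}

noncomputable def eKin {d : ℕ} (ρ : ℝ) (m : Fin d → ℝ) (M : Matrix (Fin d) (Fin d) ℝ) : ℝ :=
  ((d : ℝ) / 2) * lamMax (ρ⁻¹ • vecMulVec m m - M)

/-- Operator norm of a symmetric matrix: largest absolute value of the quadratic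
form over unit vectors (= largest absolute value of an eigenvalue). -/
noncomputable def opNormInf {d : ℕ} (M : Matrix (Fin d) (Fin d) ℝ) : ℝ :=
  sSup {r : ℝ | ∃ v : Fin d → ℝ, v ⬝ᵥ v = 1 ∧ |v ⬝ᵥ M.mulVec v| = r}

open scoped InnerProductSpace

section InnerProductSpace

variable {E : Type*} [NormedAddCommGroup E] [InnerProductSpace ℝ E]

theorem orthonormal_singleton {v : E} (hv : ‖v‖ = 1) :
    Orthonormal ℝ ((↑) : ({v} : Set E) → E) := by
  classical
  rw [orthonormal_subtype_iff_ite]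
  rintro x rfl y rfl
  simp [hv]

theorem inner_map_self_le_of_trace_eq_zero [FiniteDimensional ℝ E] {T : E →ₗ[ℝ] E}
    (hT : LinearMap.trace ℝ E T = 0) {L : ℝ} (hL : ∀ w : E, ‖w‖ = 1 → -L ≤ ⟪w, T w⟫_ℝ)
    {v : E} (hv : ‖v‖ = 1) :
    ⟪v, T v⟫_ℝ ≤ (Module.finrank ℝ E - 1 : ℝ) * L := by
  classical
  obtain ⟨u, b, hvu, hb⟩ := (orthonormal_singleton hv).exists_orthonormalBasis_extension
  have hv_mem : v ∈ u := hvu rfl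
  have hcard : (Module.finrank ℝ E : ℝ) - 1 = ((u.erase v).card : ℝ) := by
    rw [Finset.card_erase_of_mem hv_mem, Module.finrank_eq_card_basis b.toBasis,
      Fintype.card_coe, Nat.cast_pred (Finset.card_pos.mpr ⟨v, hv_mem⟩)]
  have hrest : ((u.erase v).card : ℝ) * -L ≤ ∑ w ∈ u.erase v, ⟪w, T w⟫_ℝ := by
    rw [← nsmul_eq_mul]
    refine Finset.card_nsmul_le_sum _ _ _ fun w hw => hL w ?_
    simpa [hb] using b.orthonormal.norm_eq_one ⟨w, Finset.mem_of_mem_erase hw⟩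
  have hsum : ⟪v, T v⟫_ℝ + ∑ w ∈ u.erase v, ⟪w, T w⟫_ℝ = 0 := by
    rw [Finset.add_sum_erase u (fun w => ⟪w, T w⟫_ℝ) hv_mem, ← hT, T.trace_eq_sum_inner b,
      hb, Finset.sum_coe_sort u fun w => ⟪w, T w⟫_ℝ]
  rw [hcard]
  linarith

end InnerProductSpace

theorem EuclideanSpace.norm_eq_one_iff_dotProduct_self {n : Type*} [Fintype n]
    (x : EuclideanSpace ℝ n) :
    ‖x‖ = 1 ↔ x.ofLp ⬝ᵥ x.ofLp = 1 := by
  rw [← pow_eq_one_iff_of_nonneg (norm_nonneg x) two_ne_zero, ← real_inner_self_eq_norm_sq,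
    EuclideanSpace.inner_eq_star_dotProduct, star_trivial]

namespace Matrix

variable {n : Type*} [Fintype n]

theorem inner_toEuclideanLin_self [DecidableEq n] (M : Matrix n n ℝ) (x : EuclideanSpace ℝ n) :
    ⟪x, toEuclideanLin M x⟫_ℝ = x.ofLp ⬝ᵥ M *ᵥ x.ofLp := by
  simp [EuclideanSpace.inner_eq_star_dotProduct, dotProduct_comm]

theorem dotProduct_mulVec_le_of_trace_eq_zero [DecidableEq n] {M : Matrix n n ℝ}
    (hM : M.trace = 0) {L : ℝ} (hL : ∀ w : n → ℝ, w ⬝ᵥ w = 1 → -L ≤ w ⬝ᵥ M *ᵥ w)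
    {v : n → ℝ} (hv : v ⬝ᵥ v = 1) :
    v ⬝ᵥ M *ᵥ v ≤ (Fintype.card n - 1 : ℝ) * L := by
  have key := inner_map_self_le_of_trace_eq_zero (T := toEuclideanLin M) (L := L)
    (by rwa [toEuclideanLin_eq_toLin_orthonormal, trace_toLin_eq])
    (fun w hw => by
      rw [inner_toEuclideanLin_self]
      exact hL _ ((EuclideanSpace.norm_eq_one_iff_dotProduct_self w).mp hw))
    ((EuclideanSpace.norm_eq_one_iff_dotProduct_self (WithLp.toLp 2 v)).mpr hv)
  rwa [inner_toEuclideanLin_self, finrank_euclideanSpace] at key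

theorem isCompact_setOf_dotProduct_self_eq_one :
    IsCompact {v : n → ℝ | v ⬝ᵥ v = 1} := by
  refine (isCompact_closedBall 0 1).of_isClosed_subset
    (isClosed_eq (by fun_prop) continuous_const) fun v hv => ?_
  rw [mem_closedBall_zero_iff, pi_norm_le_iff_of_nonneg zero_le_one]
  intro i
  have hvi : v i * v i ≤ 1 := hv ▸ Finset.single_le_sum (f := fun j => v j * v j)
    (fun j _ => mul_self_nonneg (v j)) (Finset.mem_univ i)
  rwa [Real.norm_eq_abs, abs_le_one_iff_mul_self_le_one]

theorem bddAbove_dotProduct_mulVec_of_dotProduct_self_eq_one (A : Matrix n n ℝ) :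
    BddAbove {r : ℝ | ∃ v : n → ℝ, v ⬝ᵥ v = 1 ∧ v ⬝ᵥ A *ᵥ v = r} :=
  isCompact_setOf_dotProduct_self_eq_one.bddAbove_image (by fun_prop)

theorem dotProduct_vecMulVec_self_mulVec (m v : n → ℝ) :
    v ⬝ᵥ vecMulVec m m *ᵥ v = (m ⬝ᵥ v) ^ 2 := by
  rw [vecMulVec_mulVec, dotProduct_comm m v]
  simp [sq]

end Matrix

theorem dotProduct_mulVec_le_lamMax {d : ℕ} (A : Matrix (Fin d) (Fin d) ℝ) {v : Fin d → ℝ}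
    (hv : v ⬝ᵥ v = 1) : v ⬝ᵥ A *ᵥ v ≤ lamMax A :=
  le_csSup (bddAbove_dotProduct_mulVec_of_dotProduct_self_eq_one A) ⟨v, hv, rfl⟩

theorem neg_lamMax_le_dotProduct_mulVec {d : ℕ} {ρ : ℝ} (hρ : 0 ≤ ρ) (m : Fin d → ℝ)
    (M : Matrix (Fin d) (Fin d) ℝ) {v : Fin d → ℝ} (hv : v ⬝ᵥ v = 1) :
    -lamMax (ρ⁻¹ • vecMulVec m m - M) ≤ v ⬝ᵥ M *ᵥ v := by
  have h := dotProduct_mulVec_le_lamMax (ρ⁻¹ • vecMulVec m m - M) hv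
  rw [sub_mulVec, dotProduct_sub, smul_mulVec, dotProduct_smul, smul_eq_mul,
    dotProduct_vecMulVec_self_mulVec] at h
  have : 0 ≤ ρ⁻¹ * (m ⬝ᵥ v) ^ 2 := by positivity
  linarith

theorem opNorm_le_eKin_general {d : ℕ} (hd : 2 ≤ d) (ρ : ℝ) (hρ : 0 < ρ)
    (m : Fin d → ℝ) (M : Matrix (Fin d) (Fin d) ℝ)
    (htr : M.trace = 0) :
    opNormInf M ≤ 2 * (((d : ℝ) - 1) / d) * eKin ρ m M := by
  set L := lamMax (ρ⁻¹ • vecMulVec m m - M) with hL_def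
  have hlow : ∀ v : Fin d → ℝ, v ⬝ᵥ v = 1 → -L ≤ v ⬝ᵥ M *ᵥ v :=
    fun v hv => neg_lamMax_le_dotProduct_mulVec hρ.le m M hv
  have hup : ∀ v : Fin d → ℝ, v ⬝ᵥ v = 1 → v ⬝ᵥ M *ᵥ v ≤ (d - 1 : ℝ) * L := fun v hv => by
    simpa using dotProduct_mulVec_le_of_trace_eq_zero htr hlow hv
  have hd_real : (2 : ℝ) ≤ d := by exact_mod_cast hd
  have hL : 0 ≤ L := by
    let e : Fin d → ℝ := Pi.single ⟨0, by omega⟩ 1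
    have he : e ⬝ᵥ e = 1 := by simp [e]
    nlinarith [hlow e he, hup e he]
  have hrhs : 2 * (((d : ℝ) - 1) / d) * eKin ρ m M = (d - 1 : ℝ) * L := by
    rw [eKin, ← hL_def]
    field_simp
  rw [hrhs]
  refine Real.sSup_le ?_ (by nlinarith)
  rintro _ ⟨v, hv, rfl⟩
  exact abs_le.2 ⟨by nlinarith [hlow v hv], hup v hv⟩

/-- |M|_∞ ≤ 2·((d−1)/d)·e_kin(ρ,m,M). -/
theorem opNorm_le_eKin {d : ℕ} (hd : 2 ≤ d) (ρ : ℝ) (hρ : 0 < ρ)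
    (m : Fin d → ℝ) (M : Matrix (Fin d) (Fin d) ℝ)
    (hsymm : M.IsSymm) (htr : M.trace = 0) :
    opNormInf M ≤ 2 * (((d : ℝ) - 1) / d) * eKin ρ m M :=
  opNorm_le_eKin_general hd ρ hρ m M htr
end

section
/- The function F(ρ,m,M,Q) := p(ρ) + (2/d)e_kin(ρ,m,M) − Q is convex on ℝ⁺ × ℝ^d × S₀^d × ℝ, vanishes on the constitutive set K, and consequently F ≤ 0 on the convex hull of K; hence the Λ-convex hull K^Λ is contained in {F ≤ 0}. -/
/-! The kinetic energy is `e_kin(ρ,m,M) = (d/2) sup_{|v|=1} (ρ⁻¹ (m⬝v)² - v⬝Mv)`, a supremum of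
functions convex in `(ρ,m,M)` because `(ρ,a) ↦ a²/ρ` is convex on `ρ > 0`; hence `F` is convex.
On `K` the matrix `m⊗m/ρ - M` is the multiple `|m|²/(dρ)` of the identity, so `F` vanishes
there. A convex function vanishing on `K` is nonpositive on its convex hull, which contains the
Λ-convex hull. -/

open Matrix

noncomputable def circProd {d : ℕ} (m : Fin d → ℝ) : Matrix (Fin d) (Fin d) ℝ :=
  vecMulVec m m - ((1 / (d : ℝ)) * (m ⬝ᵥ m)) • (1 : Matrix (Fin d) (Fin d) ℝ)

abbrev StateSpace (d : ℕ) := ℝ × (Fin d → ℝ) × Matrix (Fin d) (Fin d) ℝ × ℝ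

noncomputable def Kset (d : ℕ) (p : ℝ → ℝ) : Set (StateSpace d) :=
  {z | 0 < z.1 ∧ z.2.2.1 = z.1⁻¹ • circProd z.2.1 ∧
    z.2.2.2 = p z.1 + (z.2.1 ⬝ᵥ z.2.1) / (z.1 * d)}

noncomputable def waveCone (d : ℕ) : Set (StateSpace d) :=
  {z | z ≠ 0 ∧
    (Matrix.fromBlocks
        (z.2.2.1 + z.2.2.2 • (1 : Matrix (Fin d) (Fin d) ℝ)) (Matrix.replicateCol (Fin 1) z.2.1)
        (Matrix.replicateRow (Fin 1) z.2.1) (Matrix.of fun _ _ => z.1)).det = 0}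

def lamHull {V : Type*} [AddCommGroup V] [Module ℝ V] (K L : Set V) : Set V :=
  ⋂₀ {S | K ⊆ S ∧ ∀ z₁ ∈ S, ∀ z₂ ∈ S, z₁ - z₂ ∈ L →
      ∀ t ∈ Set.Icc (0 : ℝ) 1, t • z₁ + (1 - t) • z₂ ∈ S}

/-- The function F(ρ,m,M,Q) := p(ρ) + (2/d)e_kin(ρ,m,M) − Q. -/
noncomputable def Ffun (d : ℕ) (p : ℝ → ℝ) (z : StateSpace d) : ℝ :=
  p z.1 + (2 / (d : ℝ)) * eKin z.1 z.2.1 z.2.2.1 - z.2.2.2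

open Set

section lamMax

variable {d : ℕ}

lemma abs_le_one_of_dotProduct_self_eq_one {v : Fin d → ℝ} (hv : v ⬝ᵥ v = 1) (i : Fin d) :
    |v i| ≤ 1 := by
  rw [← sq_le_one_iff_abs_le_one, sq, ← hv]
  exact Finset.single_le_sum (f := fun j => v j * v j) (fun j _ => mul_self_nonneg _)
    (Finset.mem_univ i)

lemma exists_dotProduct_self_eq_one (hd : 0 < d) : ∃ v : Fin d → ℝ, v ⬝ᵥ v = 1 :=
  ⟨Pi.single ⟨0, hd⟩ 1, by simp⟩

lemma bddAbove_quadForm_unit (A : Matrix (Fin d) (Fin d) ℝ) :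
    BddAbove {r : ℝ | ∃ v : Fin d → ℝ, v ⬝ᵥ v = 1 ∧ v ⬝ᵥ A *ᵥ v = r} := by
  refine ⟨∑ i, ∑ j, |A i j|, ?_⟩
  rintro r ⟨v, hv, rfl⟩
  have hvi := abs_le_one_of_dotProduct_self_eq_one hv
  calc v ⬝ᵥ A *ᵥ v = ∑ i, ∑ j, v i * (A i j * v j) := by
        simp only [dotProduct, mulVec, Finset.mul_sum]
    _ ≤ ∑ i, ∑ j, |v i| * |A i j| * |v j| := by
        refine Finset.sum_le_sum fun i _ => Finset.sum_le_sum fun j _ => ?_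
        rw [← abs_mul, ← abs_mul, mul_assoc]
        exact le_abs_self _
    _ ≤ ∑ i, ∑ j, 1 * |A i j| * 1 := by
        gcongr with i _ j _
        · exact hvi i
        · exact hvi j
    _ = ∑ i, ∑ j, |A i j| := by simp

lemma quadForm_le_lamMax (A : Matrix (Fin d) (Fin d) ℝ) {v : Fin d → ℝ} (hv : v ⬝ᵥ v = 1) :
    v ⬝ᵥ A *ᵥ v ≤ lamMax A :=
  le_csSup (bddAbove_quadForm_unit A) ⟨v, hv, rfl⟩

lemma lamMax_le (hd : 0 < d) {A : Matrix (Fin d) (Fin d) ℝ} {c : ℝ}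
    (h : ∀ v : Fin d → ℝ, v ⬝ᵥ v = 1 → v ⬝ᵥ A *ᵥ v ≤ c) : lamMax A ≤ c := by
  obtain ⟨u, hu⟩ := exists_dotProduct_self_eq_one hd
  refine csSup_le ⟨_, u, hu, rfl⟩ ?_
  rintro r ⟨v, hv, rfl⟩
  exact h v hv

lemma lamMax_smul_one (hd : 0 < d) (c : ℝ) : lamMax (c • (1 : Matrix (Fin d) (Fin d) ℝ)) = c := by
  have hquad : ∀ v : Fin d → ℝ, v ⬝ᵥ v = 1 → v ⬝ᵥ (c • 1 : Matrix (Fin d) (Fin d) ℝ) *ᵥ v = c := by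
    intro v hv
    rw [smul_mulVec, one_mulVec, dotProduct_smul, hv, smul_eq_mul, mul_one]
  refine le_antisymm (lamMax_le hd fun v hv => (hquad v hv).le) ?_
  obtain ⟨u, hu⟩ := exists_dotProduct_self_eq_one hd
  exact (hquad u hu).symm.le.trans (quadForm_le_lamMax _ hu)

end lamMax

lemma convexOn_inv_mul_sq : ConvexOn ℝ (Ioi 0 ×ˢ univ) fun x : ℝ × ℝ => x.1⁻¹ * x.2 ^ 2 := by
  refine ⟨(convex_Ioi 0).prod convex_univ, ?_⟩
  rintro ⟨ρ₁, a⟩ ⟨hρ₁, -⟩ ⟨ρ₂, b⟩ ⟨hρ₂, -⟩ t s ht hs hts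
  simp only [mem_Ioi] at hρ₁ hρ₂
  simp only [Prod.smul_mk, Prod.mk_add_mk, smul_eq_mul]
  have hρ : 0 < t * ρ₁ + s * ρ₂ := by
    rcases ht.eq_or_lt with rfl | ht'
    · simp_all
    · positivity
  rw [inv_mul_le_iff₀ hρ]
  have key : (t * ρ₁ + s * ρ₂) * (t * (ρ₁⁻¹ * a ^ 2) + s * (ρ₂⁻¹ * b ^ 2))
      = (t * a + s * b) ^ 2 + t * s * (a * ρ₂ - b * ρ₁) ^ 2 / (ρ₁ * ρ₂) := by
    field_simp
    ring
  rw [key, le_add_iff_nonneg_right]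
  positivity

lemma dotProduct_vecMulVec_mulVec {n R : Type*} [Fintype n] [CommRing R] (u w v : n → R) :
    v ⬝ᵥ vecMulVec u w *ᵥ v = (v ⬝ᵥ u) * (w ⬝ᵥ v) := by
  rw [vecMulVec_mulVec, op_smul_eq_smul, dotProduct_smul, smul_eq_mul, mul_comm]

lemma quadForm_kinetic {d : ℕ} (ρ : ℝ) (m : Fin d → ℝ) (M : Matrix (Fin d) (Fin d) ℝ)
    (v : Fin d → ℝ) :
    v ⬝ᵥ (ρ⁻¹ • vecMulVec m m - M) *ᵥ v = ρ⁻¹ * (m ⬝ᵥ v) ^ 2 - v ⬝ᵥ M *ᵥ v := by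
  rw [sub_mulVec, dotProduct_sub, smul_mulVec, dotProduct_smul, dotProduct_vecMulVec_mulVec,
    dotProduct_comm v m, smul_eq_mul, sq]

lemma convexOn_eKin {d : ℕ} (hd : 0 < d) :
    ConvexOn ℝ (Ioi 0 ×ˢ univ)
      fun x : ℝ × (Fin d → ℝ) × Matrix (Fin d) (Fin d) ℝ => eKin x.1 x.2.1 x.2.2 := by
  refine ConvexOn.smul (by positivity) ⟨(convex_Ioi 0).prod convex_univ, ?_⟩
  rintro ⟨ρ₁, m₁, M₁⟩ ⟨hρ₁, -⟩ ⟨ρ₂, m₂, M₂⟩ ⟨hρ₂, -⟩ t s ht hs hts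
  simp only [Prod.smul_mk, Prod.mk_add_mk, smul_eq_mul]
  refine lamMax_le hd fun v hv => ?_
  have hsq := convexOn_inv_mul_sq.2 (x := (ρ₁, m₁ ⬝ᵥ v)) (y := (ρ₂, m₂ ⬝ᵥ v))
    ⟨hρ₁, trivial⟩ ⟨hρ₂, trivial⟩ ht hs hts
  simp only [Prod.smul_mk, Prod.mk_add_mk, smul_eq_mul] at hsq
  have h₁ := quadForm_le_lamMax (ρ₁⁻¹ • vecMulVec m₁ m₁ - M₁) hv
  have h₂ := quadForm_le_lamMax (ρ₂⁻¹ • vecMulVec m₂ m₂ - M₂) hv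
  rw [quadForm_kinetic] at h₁ h₂ ⊢
  simp only [add_dotProduct, smul_dotProduct, add_mulVec, smul_mulVec, dotProduct_add,
    dotProduct_smul, smul_eq_mul]
  nlinarith [mul_le_mul_of_nonneg_left h₁ ht, mul_le_mul_of_nonneg_left h₂ hs]

lemma convexOn_Ffun {d : ℕ} (hd : 0 < d) {p : ℝ → ℝ} (hp : ConvexOn ℝ (Ioi 0) p) :
    ConvexOn ℝ {z : StateSpace d | 0 < z.1} (Ffun d p) := by
  have hS : Convex ℝ {z : StateSpace d | 0 < z.1} :=
    (convex_Ioi 0).linear_preimage (LinearMap.fst ℝ ℝ _)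
  have hpρ : ConvexOn ℝ {z : StateSpace d | 0 < z.1} fun z => p z.1 :=
    hp.comp_linearMap (LinearMap.fst ℝ ℝ _)
  have hkin : ConvexOn ℝ {z : StateSpace d | 0 < z.1} fun z => eKin z.1 z.2.1 z.2.2.1 :=
    ((convexOn_eKin hd).comp_linearMap
      (LinearMap.id.prodMap (LinearMap.id.prodMap (LinearMap.fst ℝ _ ℝ)))).subset
      (fun _ hz => ⟨hz, trivial⟩) hS
  have hQ : ConcaveOn ℝ {z : StateSpace d | 0 < z.1} fun z => z.2.2.2 :=
    (LinearMap.snd ℝ _ ℝ ∘ₗ LinearMap.snd ℝ _ _ ∘ₗ LinearMap.snd ℝ _ _).concaveOn hS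
  exact (hpρ.add (hkin.smul (by positivity : (0 : ℝ) ≤ 2 / d))).sub hQ

lemma circProd_isSymm {d : ℕ} (m : Fin d → ℝ) : (circProd m).IsSymm := by
  rw [IsSymm, circProd, transpose_sub, transpose_smul, transpose_one, transpose_vecMulVec]

lemma trace_circProd {d : ℕ} (hd : 0 < d) (m : Fin d → ℝ) : (circProd m).trace = 0 := by
  rw [circProd, trace_sub, trace_smul, trace_one, trace_vecMulVec, Fintype.card_fin, smul_eq_mul]
  field_simp
  ring

lemma eKin_smul_circProd {d : ℕ} (hd : 0 < d) (ρ : ℝ) (m : Fin d → ℝ) :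
    eKin ρ m (ρ⁻¹ • circProd m) = (m ⬝ᵥ m) / (2 * ρ) := by
  rw [eKin, ← smul_sub, circProd, sub_sub_cancel, smul_smul, lamMax_smul_one hd]
  field_simp

lemma Ffun_eq_zero_of_mem_Kset {d : ℕ} (hd : 0 < d) {p : ℝ → ℝ} {z : StateSpace d}
    (hz : z ∈ Kset d p) : Ffun d p z = 0 := by
  obtain ⟨hρ, hM, hQ⟩ := hz
  rw [Ffun, hM, hQ, eKin_smul_circProd hd]
  field_simp
  ring

lemma convex_symm_traceless {d : ℕ} :
    Convex ℝ {z : StateSpace d | 0 < z.1 ∧ z.2.2.1.IsSymm ∧ z.2.2.1.trace = 0} := by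
  rintro z₁ ⟨hρ₁, hsymm₁, htr₁⟩ z₂ ⟨hρ₂, hsymm₂, htr₂⟩ t s ht hs hts
  refine ⟨convex_Ioi (0 : ℝ) hρ₁ hρ₂ ht hs hts, (hsymm₁.smul t).add (hsymm₂.smul s), ?_⟩
  change (t • z₁.2.2.1 + s • z₂.2.2.1).trace = 0
  rw [trace_add, trace_smul, trace_smul, htr₁, htr₂, smul_zero, smul_zero, add_zero]

lemma Kset_subset_symm_traceless {d : ℕ} (hd : 0 < d) (p : ℝ → ℝ) :
    Kset d p ⊆ {z : StateSpace d | 0 < z.1 ∧ z.2.2.1.IsSymm ∧ z.2.2.1.trace = 0} := by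
  rintro z ⟨hρ, hM, -⟩
  refine ⟨hρ, hM ▸ (circProd_isSymm _).smul _, ?_⟩
  rw [hM, trace_smul, trace_circProd hd, smul_zero]

lemma lamHull_subset_convexHull {V : Type*} [AddCommGroup V] [Module ℝ V] (K L : Set V) :
    lamHull K L ⊆ convexHull ℝ K := by
  refine sInter_subset_of_mem ⟨subset_convexHull ℝ K, fun z₁ h₁ z₂ h₂ _ t ht => ?_⟩
  exact convex_convexHull ℝ K h₁ h₂ ht.1 (sub_nonneg.2 ht.2) (add_sub_cancel _ _)

/-- F is convex on ℝ⁺ × ℝ^d × S₀^d × ℝ, vanishes on K, hence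
F ≤ 0 on the convex hull of K, and K^Λ ⊆ {F ≤ 0}. -/
theorem Ffun_convex_and_hull_bound {d : ℕ} (hd : 2 ≤ d) (p : ℝ → ℝ)
    (hp : ConvexOn ℝ (Set.Ioi 0) p) :
    ConvexOn ℝ
      {z : StateSpace d | 0 < z.1 ∧ z.2.2.1.IsSymm ∧ z.2.2.1.trace = 0}
      (Ffun d p) ∧
    (∀ z ∈ Kset d p, Ffun d p z = 0) ∧
    (∀ z ∈ convexHull ℝ (Kset d p), Ffun d p z ≤ 0) ∧
    lamHull (Kset d p) (waveCone d) ⊆ {z | Ffun d p z ≤ 0} := by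
  have hd₀ : 0 < d := by omega
  have hconv := (convexOn_Ffun hd₀ hp).subset (fun _ hz => hz.1) convex_symm_traceless
  have hK := Kset_subset_symm_traceless hd₀ p
  have hvanish : ∀ z ∈ Kset d p, Ffun d p z = 0 := fun _ => Ffun_eq_zero_of_mem_Kset hd₀
  have hhull : ∀ z ∈ convexHull ℝ (Kset d p), Ffun d p z ≤ 0 := by
    intro z hz
    obtain ⟨y, hy, hzy⟩ := hconv.exists_ge_of_mem_convexHull hK hz
    exact hzy.trans (hvanish y hy).le
  exact ⟨hconv, hvanish, hhull, fun z hz => hhull z (lamHull_subset_convexHull _ _ hz)⟩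
end
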